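/- Let n ≥ 6 and G = K₃ ∨ (K_{n−5} + 2K₁) (a graph on n vertices). Then ρ_D(G) > (2n² + 6n − 36)/n. -/

import Mathlib

open SimpleGraph Finset

/-- The transmission of a vertex: sum of distances to all other vertices. -/
noncomputable def transmission {V : Type*} [Fintype V] (G : SimpleGraph V) (u : V) : ℕ :=
  ∑ v, G.dist u v

/-- The transmission σ(G): sum of distances over all unordered pairs. -/
noncomputable def transmissionOf {V : Type*} [Fintype V] (G : SimpleGraph V) : ℝ :=
  (1 / 2) * ∑ u, ∑ v, (G.dist u v : ℝ)

/-- The distance signless Laplacian matrix Q_D(G) = Tr(G) + 𝒟(G). -/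
noncomputable def distSignlessLaplacian {V : Type*} [Fintype V] [DecidableEq V]
    (G : SimpleGraph V) : Matrix V V ℝ :=
  fun u v => (if u = v then (transmission G u : ℝ) else 0) + (G.dist u v : ℝ)

/-- `ρ` is the distance signless Laplacian spectral radius of `G`,
i.e. the largest eigenvalue of `Q_D(G)`. -/
noncomputable def IsDistSLSpectralRadius {V : Type*} [Fintype V] [DecidableEq V]
    (G : SimpleGraph V) (ρ : ℝ) : Prop :=
  IsGreatest {μ : ℝ | Module.End.HasEigenvalue (Matrix.toLin' (distSignlessLaplacian G)) μ} ρ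

/-- Join of two graphs. -/
def joinGraph {α β : Type*} (G : SimpleGraph α) (H : SimpleGraph β) : SimpleGraph (α ⊕ β) :=
  SimpleGraph.fromRel (fun x y =>
    match x, y with
    | Sum.inl a, Sum.inl b => G.Adj a b
    | Sum.inr a, Sum.inr b => H.Adj a b
    | Sum.inl _, Sum.inr _ => True
    | Sum.inr _, Sum.inl _ => False)

/-- The graph H_{t,n-t}. -/
def HGraph (n t : ℕ) : SimpleGraph (Fin n ⊕ Fin n) :=
  SimpleGraph.fromRel (fun x y =>
    match x, y with
    | Sum.inl i, Sum.inr j => (j : ℕ) < n - t ∨ (i : ℕ) < t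
    | _, _ => False)

/-- Hamilton-connected. -/
def IsHamiltonianConnected {V : Type*} [DecidableEq V] (G : SimpleGraph V) : Prop :=
  ∀ u v : V, u ≠ v → ∃ p : G.Walk u v, p.IsHamiltonian

/-- Traceable from every vertex. -/
def TraceableFromEveryVertex {V : Type*} [DecidableEq V] (G : SimpleGraph V) : Prop :=
  ∀ u : V, ∃ v : V, ∃ p : G.Walk u v, p.IsHamiltonian

/-- K_{n-1} + e : complete graph on n-1 vertices with a pendant edge. -/
def KPlusPendant (n : ℕ) : SimpleGraph (Fin (n - 1) ⊕ Fin 1) :=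
  SimpleGraph.fromRel (fun x y =>
    match x, y with
    | Sum.inl a, Sum.inl b => a ≠ b
    | Sum.inl a, Sum.inr _ => (a : ℕ) = 0
    | _, _ => False)

/-!
The Rayleigh quotient of `Q_D(G)` at the all-ones vector `𝟏` is `2 ∑ᵤ Tr(u) / n`, so
`ρ_D(G) ≥ 2 ∑ᵤ Tr(u) / n`. Equality would make `𝟏` a maximiser of the Rayleigh quotient of a
symmetric operator, hence an eigenvector, i.e. all row sums `2 Tr(u)` of `Q_D(G)` would agree.
In `K₃ ∨ (K_{n-5} + 2K₁)` every two vertices have a common neighbour in `K₃`, so distances are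
`1` or `2` and the transmissions are `n - 1`, `n + 1` and `2n - 5`; thus the graph is not
transmission regular and `2 ∑ᵤ Tr(u) = 2n² + 6n - 36`.
-/

open Module.End

namespace LinearMap.IsSymmetric

variable {E : Type*} [NormedAddCommGroup E] [InnerProductSpace ℝ E] [FiniteDimensional ℝ E]
  {T : E →ₗ[ℝ] E} {ρ : ℝ}

theorem inner_map_self_le_of_isGreatest (hT : T.IsSymmetric)
    (hρ : IsGreatest {μ | HasEigenvalue T μ} ρ) (x : E) : inner ℝ (T x) x ≤ ρ * ‖x‖ ^ 2 := by
  rcases eq_or_ne x 0 with rfl | hx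
  · simp
  have : Nontrivial E := ⟨⟨x, 0, hx⟩⟩
  set T' := LinearMap.toContinuousLinearMap T
  have hbdd : BddAbove (Set.range fun y : {y : E // y ≠ 0} ↦ T'.rayleighQuotient y) :=
    ⟨‖T'‖, by rintro _ ⟨y, rfl⟩; exact (le_abs_self _).trans (T'.rayleighQuotient_le_norm y)⟩
  have hquot : inner ℝ (T x) x / ‖x‖ ^ 2 ≤ ρ :=
    (le_ciSup hbdd ⟨x, hx⟩).trans (hρ.2 hT.hasEigenvalue_iSup_of_finiteDimensional)
  rwa [div_le_iff₀ (by positivity)] at hquot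

theorem apply_eq_smul_of_inner_map_self_eq (hT : T.IsSymmetric)
    (hρ : IsGreatest {μ | HasEigenvalue T μ} ρ) {x : E} (hx : inner ℝ (T x) x = ρ * ‖x‖ ^ 2) :
    T x = ρ • x := by
  rcases eq_or_ne x 0 with rfl | hx0
  · simp
  set T' := LinearMap.toContinuousLinearMap T
  have hmax : IsMaxOn T'.reApplyInnerSelf (Metric.sphere 0 ‖x‖) x := by
    intro y hy
    rw [mem_sphere_zero_iff_norm] at hy
    have := hT.inner_map_self_le_of_isGreatest hρ y
    simp only [ContinuousLinearMap.reApplyInnerSelf_apply, RCLike.re_to_real]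
    exact (hy ▸ this).trans hx.ge
  have hSA : IsSelfAdjoint T' := by
    rwa [ContinuousLinearMap.isSelfAdjoint_iff_isSymmetric]
  obtain ⟨c, hc⟩ : ∃ c : ℝ, T x = c • x :=
    ⟨_, mem_eigenspace_iff.mp (hSA.hasEigenvector_of_isMaxOn hx0 hmax).1⟩
  have hcρ : c = ρ := by
    rw [hc, real_inner_smul_left, real_inner_self_eq_norm_sq] at hx
    exact mul_right_cancel₀ (by positivity) hx
  rw [hc, hcρ]

end LinearMap.IsSymmetric

namespace Matrix

variable {n : Type*} [Fintype n] [DecidableEq n] {A : Matrix n n ℝ} {ρ : ℝ}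

theorem IsHermitian.dotProduct_mulVec_lt_of_isGreatest (hA : A.IsHermitian)
    (hρ : IsGreatest {μ | HasEigenvalue (toLin' A) μ} ρ) {x : n → ℝ} (hx : A *ᵥ x ≠ ρ • x) :
    x ⬝ᵥ A *ᵥ x < ρ * (x ⬝ᵥ x) := by
  have hT := isSymmetric_toEuclideanLin_iff.mpr hA
  have hρ' : IsGreatest {μ | HasEigenvalue (toEuclideanLin A) μ} ρ := by
    simpa only [hasEigenvalue_iff_mem_spectrum, spectrum_toLpLin, spectrum_toLin'] using hρ
  set y : EuclideanSpace ℝ n := WithLp.toLp 2 x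
  have hinner : inner ℝ (toEuclideanLin A y) y = x ⬝ᵥ A *ᵥ x := by
    simp [y, EuclideanSpace.inner_eq_star_dotProduct]
  have hnorm : ‖y‖ ^ 2 = x ⬝ᵥ x := by
    rw [← real_inner_self_eq_norm_sq, EuclideanSpace.inner_toLp_toLp, star_trivial]
  have hle := hT.inner_map_self_le_of_isGreatest hρ' y
  rw [hinner, hnorm] at hle
  refine hle.lt_of_ne fun heq ↦ hx ?_
  have hy := hT.apply_eq_smul_of_inner_map_self_eq hρ' (by rw [hinner, hnorm, heq])
  simpa [y] using congrArg WithLp.ofLp hy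

theorem IsHermitian.sum_sum_lt_of_isGreatest (hA : A.IsHermitian)
    (hρ : IsGreatest {μ | HasEigenvalue (toLin' A) μ} ρ) {i j : n}
    (hij : ∑ k, A i k ≠ ∑ k, A j k) : ∑ i, ∑ j, A i j < ρ * Fintype.card n := by
  have hrow (i : n) : (A *ᵥ 1) i = ∑ k, A i k := by simp [mulVec, dotProduct]
  have hones : A *ᵥ 1 ≠ ρ • 1 := fun h ↦ hij <| by
    rw [← hrow, ← hrow, h]
    simp
  simpa [hrow, one_dotProduct, one_dotProduct_one] using
    hA.dotProduct_mulVec_lt_of_isGreatest hρ hones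

end Matrix

theorem Fintype.sum_eq_card_sub_one_nsmul {α M : Type*} [Fintype α] [DecidableEq α]
    [AddCommMonoid M] {f : α → M} {c : M} (x : α) (hx : f x = 0) (hc : ∀ y ≠ x, f y = c) :
    ∑ y, f y = (Fintype.card α - 1) • c := by
  rw [Fintype.sum_eq_add_sum_compl x, hx, zero_add, Finset.sum_congr rfl fun y hy ↦
    hc y (by simpa using hy), Finset.sum_const, Finset.card_compl, Finset.card_singleton]

namespace SimpleGraph

variable {V : Type*} {G : SimpleGraph V} {u v w : V}

theorem dist_eq_two_of_mem_commonNeighbors (huv : u ≠ v) (hadj : ¬G.Adj u v)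
    (hw : w ∈ G.commonNeighbors u v) : G.dist u v = 2 := by
  rw [dist, edist_eq_two_iff.mpr ⟨huv, hadj, w, hw⟩]
  rfl

end SimpleGraph

section distSignlessLaplacian

variable {V : Type*} [Fintype V] [DecidableEq V] {G : SimpleGraph V}

theorem distSignlessLaplacian_isHermitian (G : SimpleGraph V) :
    (distSignlessLaplacian G).IsHermitian := by
  ext u v
  by_cases h : u = v
  · simp [h]
  · simp [distSignlessLaplacian, h, Ne.symm h, SimpleGraph.dist_comm]

theorem sum_distSignlessLaplacian_apply (G : SimpleGraph V) (u : V) :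
    ∑ v, distSignlessLaplacian G u v = 2 * transmission G u := by
  simp [distSignlessLaplacian, Finset.sum_add_distrib, transmission, two_mul]

theorem IsDistSLSpectralRadius.two_mul_sum_transmission_lt {ρ : ℝ}
    (hρ : IsDistSLSpectralRadius G ρ) {u v : V} (huv : transmission G u ≠ transmission G v) :
    2 * ∑ w, (transmission G w : ℝ) < ρ * Fintype.card V := by
  have := (distSignlessLaplacian_isHermitian G).sum_sum_lt_of_isGreatest hρ (i := u) (j := v)
    (by simpa [sum_distSignlessLaplacian_apply] using huv)
  simpa [sum_distSignlessLaplacian_apply, Finset.mul_sum] using this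

end distSignlessLaplacian

section joinGraph

open Sum SimpleGraph

variable {α β : Type*} {G : SimpleGraph α} {H : SimpleGraph β}

@[simp]
theorem joinGraph_adj_inl_inl {a a' : α} : (joinGraph G H).Adj (inl a) (inl a') ↔ G.Adj a a' := by
  simpa [joinGraph, G.adj_comm a' a] using G.ne_of_adj

@[simp]
theorem joinGraph_adj_inr_inr {b b' : β} : (joinGraph G H).Adj (inr b) (inr b') ↔ H.Adj b b' := by
  simpa [joinGraph, H.adj_comm b' b] using H.ne_of_adj

@[simp]
theorem joinGraph_adj_inl_inr (a : α) (b : β) : (joinGraph G H).Adj (inl a) (inr b) := by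
  simp [joinGraph]

theorem joinGraph_dist_inl_inr (a : α) (b : β) : (joinGraph G H).dist (inl a) (inr b) = 1 :=
  dist_eq_one_iff_adj.mpr (joinGraph_adj_inl_inr a b)

theorem joinGraph_dist_inr_inl (b : β) (a : α) : (joinGraph G H).dist (inr b) (inl a) = 1 := by
  rw [dist_comm, joinGraph_dist_inl_inr]

theorem joinGraph_dist_inr_inr_of_not_adj [Nonempty α] {b b' : β} (hne : b ≠ b')
    (hadj : ¬H.Adj b b') : (joinGraph G H).dist (inr b) (inr b') = 2 := by
  obtain ⟨a⟩ := ‹Nonempty α›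
  refine dist_eq_two_of_mem_commonNeighbors (by simpa) (by simpa) (w := inl a) ?_
  simp [mem_commonNeighbors, (joinGraph_adj_inl_inr a _).symm]

end joinGraph

section completeJoin

open Sum SimpleGraph

variable {a b c : ℕ}

/-- `K_a ∨ (K_b + cK₁)` -/
abbrev completeJoinCompleteSumEmpty (a b c : ℕ) : SimpleGraph (Fin a ⊕ (Fin b ⊕ Fin c)) :=
  joinGraph ⊤ (⊤ ⊕g ⊥)

local notation "Γ" => completeJoinCompleteSumEmpty a b c

theorem transmission_completeJoinCompleteSumEmpty_inl (x : Fin a) :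
    transmission Γ (inl x) = (a - 1) + (b + c) := by
  have hclique : ∑ y, dist Γ (inl x) (inl y) = (Fintype.card (Fin a) - 1) • 1 :=
    Fintype.sum_eq_card_sub_one_nsmul (f := fun y ↦ dist Γ (inl x) (inl y)) x
      dist_self fun y hy ↦ dist_eq_one_iff_adj.mpr (by simpa using hy.symm)
  simp [transmission, Fintype.sum_sum_type, hclique, joinGraph_dist_inl_inr]

theorem transmission_completeJoinCompleteSumEmpty_inr_inl [NeZero a] (i : Fin b) :
    transmission Γ (inr (inl i)) = a + ((b - 1) + 2 * c) := by
  have hclique : ∑ j, dist Γ (inr (inl i)) (inr (inl j)) = (Fintype.card (Fin b) - 1) • 1 :=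
    Fintype.sum_eq_card_sub_one_nsmul (f := fun j ↦ dist Γ (inr (inl i)) (inr (inl j))) i
      dist_self fun j hj ↦ dist_eq_one_iff_adj.mpr (by simpa using hj.symm)
  simp [transmission, Fintype.sum_sum_type, hclique, joinGraph_dist_inr_inl,
    joinGraph_dist_inr_inr_of_not_adj, mul_comm]

theorem transmission_completeJoinCompleteSumEmpty_inr_inr [NeZero a] (j : Fin c) :
    transmission Γ (inr (inr j)) = a + (2 * b + 2 * (c - 1)) := by
  have hempty : ∑ k, dist Γ (inr (inr j)) (inr (inr k)) = (Fintype.card (Fin c) - 1) • 2 :=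
    Fintype.sum_eq_card_sub_one_nsmul (f := fun k ↦ dist Γ (inr (inr j)) (inr (inr k))) j
      dist_self fun k hk ↦ joinGraph_dist_inr_inr_of_not_adj (by simpa using hk.symm) (by simp)
  simp [transmission, Fintype.sum_sum_type, hempty, joinGraph_dist_inr_inl,
    joinGraph_dist_inr_inr_of_not_adj, mul_comm]

theorem sum_transmission_completeJoinCompleteSumEmpty [NeZero a] :
    ∑ u, transmission Γ u = a * ((a - 1) + (b + c)) +
      (b * (a + ((b - 1) + 2 * c)) + c * (a + (2 * b + 2 * (c - 1)))) := by
  simp [Fintype.sum_sum_type, transmission_completeJoinCompleteSumEmpty_inl,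
    transmission_completeJoinCompleteSumEmpty_inr_inl,
    transmission_completeJoinCompleteSumEmpty_inr_inr]

end completeJoin

/-- For G = K₃ ∨ (K_{n-5} + 2K₁) on n ≥ 6 vertices, ρ_D(G) > (2n² + 6n - 36)/n. -/
theorem stmt_10 (n : ℕ) (hn : 6 ≤ n) (ρ : ℝ)
    (hρ : IsDistSLSpectralRadius (joinGraph (⊤ : SimpleGraph (Fin 3))
      ((⊤ : SimpleGraph (Fin (n - 5))) ⊕g (⊥ : SimpleGraph (Fin 2)))) ρ) :
    (2 * (n : ℝ) ^ 2 + 6 * (n : ℝ) - 36) / (n : ℝ) < ρ := by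
  have hlt := hρ.two_mul_sum_transmission_lt (u := .inl 0) (v := .inr (.inr 0)) (by
    rw [transmission_completeJoinCompleteSumEmpty_inl,
      transmission_completeJoinCompleteSumEmpty_inr_inr]
    omega)
  rw [← Nat.cast_sum, sum_transmission_completeJoinCompleteSumEmpty] at hlt
  obtain ⟨k, rfl⟩ : ∃ k, n = k + 6 := ⟨n - 6, by omega⟩
  rw [div_lt_iff₀ (by positivity)]
  simp only [Fintype.card_sum, Fintype.card_fin, show k + 6 - 5 = k + 1 by omega] at hlt
  push_cast at hlt ⊢
  linarith
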